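/- arXiv:2008.02525 — 8 statements merged into one kernel-verified Lean document; each statement's English description precedes it below -/
import Mathlib

section
/- Let k be a field, let X be an integral normal scheme of finite type over k, and let U ⊆ X be a nonempty open subset whose complement S = X ∖ U (with its reduced structure) is irreducible of codimension 1 in X. Let f ∈ Γ(U, O_X) be a nonzero section, let Z_U(f) ⊆ U be its vanishing locus, and let Z̄ be the Zariski closure of Z_U(f) in X. Let Y be an integral scheme of finite type over k and let ψ : Y → X be a k-morphism such that ψ(Y) ∩ U ≠ ∅ and ψ(Y) ∩ S is dense in S. Then ψ(Y) ∩ S is not contained in Z̄. -/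
/-!
If `ψ(Y) ∩ S` lay in the closure of `Z = Z_U(f)`, then so would `S`. Since `X` is noetherian, the
irreducible set `S` already lies in the closure `C` of a single irreducible piece of `Z`. As that
piece meets `U`, we get `S ⊊ C`, and `C ≠ X` because `C` misses the nonempty open `D(f)`: a chain
`S ⊊ C ⊊ X` of irreducible closed sets, against the codimension of `S` being one.
-/

open AlgebraicGeometry CategoryTheory Opposite TopologicalSpace

theorem IsIrreducible.exists_isIrreducible_subset_of_subset_closure {α : Type*}
    [TopologicalSpace α] {S Z : Set α} [NoetherianSpace Z] (hS : IsIrreducible S)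
    (hSZ : S ⊆ closure Z) : ∃ T ⊆ Z, IsIrreducible T ∧ S ⊆ closure T := by
  classical
  have hfin := NoetherianSpace.finite_irreducibleComponents (α := Z)
  set pieces : Finset (Set α) := hfin.toFinset.image fun c => closure (Subtype.val '' c)
  have hcover : S ⊆ ⋃₀ ↑pieces := by
    have hZ : Z = ⋃ c ∈ irreducibleComponents Z, Subtype.val '' c := by
      rw [← Set.image_iUnion₂, ← Set.sUnion_eq_biUnion, sUnion_irreducibleComponents,
        Set.image_univ, Subtype.range_coe]
    rw [hZ, hfin.closure_biUnion] at hSZ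
    simpa [pieces, Set.sUnion_image] using hSZ
  obtain ⟨_, hmem, hS'⟩ := isIrreducible_iff_sUnion_isClosed.mp hS pieces
    (by simp [pieces, isClosed_closure]) hcover
  obtain ⟨c, hc, rfl⟩ := Finset.mem_image.mp hmem
  exact ⟨_, (Set.image_subset_range _ _).trans Subtype.range_coe.subset,
    (hfin.mem_toFinset.mp hc).1.image _ continuous_subtype_val.continuousOn, hS'⟩

theorem Order.isMax_of_coheight_eq_one_of_lt {α : Type*} [Preorder α] {a b : α}
    (ha : coheight a = 1) (hab : a < b) : IsMax b := by
  have hb := coheight_add_one_le hab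
  rw [ha, ENat.add_one_le_iff' ENat.one_ne_top, Order.lt_one_iff] at hb
  exact coheight_eq_zero.mp hb

theorem AlgebraicGeometry.isNoetherian_of_locallyOfFiniteType_of_quasiCompact {X Y : Scheme}
    (f : X ⟶ Y) [IsNoetherian Y] [LocallyOfFiniteType f] [QuasiCompact f] : IsNoetherian X where
  __ := LocallyOfFiniteType.isLocallyNoetherian f
  __ := QuasiCompact.compactSpace_of_compactSpace f

theorem AlgebraicGeometry.Scheme.closure_diff_basicOpen_ne_univ {X : Scheme} [IsReduced X]
    {U : X.Opens} {f : Γ(X, U)} (hf : f ≠ 0) :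
    closure ((U : Set X) \ X.basicOpen f) ≠ Set.univ := by
  intro h
  obtain ⟨x, hx⟩ : (X.basicOpen f : Set X).Nonempty := by
    rw [← Opens.ne_bot_iff_nonempty, Ne, basicOpen_eq_bot_iff]
    exact hf
  have hsub : closure ((U : Set X) \ X.basicOpen f) ⊆ (X.basicOpen f : Set X)ᶜ :=
    closure_minimal (fun _ hy => hy.2) (X.basicOpen f).isOpen.isClosed_compl
  exact hsub (h ▸ Set.mem_univ x) hx

/-- **Adapted morphisms** (§3.1): if `ψ(Y)` meets `U` and `ψ(Y) ∩ S` is dense in `S`,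
then `ψ` is adapted to every nonzero section `f ∈ Γ(U, O_X)`, i.e. `ψ(Y) ∩ S` is not
contained in the closure of the vanishing locus of `f`. -/
theorem adapted_of_dense_intersection
    {k : Type*} [Field k]
    (X Y : Scheme)
    (πX : X ⟶ Spec (CommRingCat.of k))
    [IsIntegral X]
    [LocallyOfFiniteType πX] [QuasiCompact πX]
    (U : X.Opens)
    (S : Set X) (hSdef : S = (U : Set X)ᶜ)
    (hSirr : IsIrreducible S)
    (hcodim : Order.coheight (α := TopologicalSpace.IrreducibleCloseds X)
        ⟨S, hSirr, by rw [hSdef]; exact U.isOpen.isClosed_compl⟩ = 1)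
    (f : Γ(X, U)) (hf : f ≠ 0)
    (ψ : Y ⟶ X)
    (hdense : S ⊆ closure (Set.range ψ.base ∩ S)) :
    ¬ (Set.range ψ.base ∩ S ⊆ closure ((U : Set X) \ (X.basicOpen f : Set X))) := by
  intro hsub
  have : IsNoetherian X := isNoetherian_of_locallyOfFiniteType_of_quasiCompact πX
  obtain ⟨T, hTZ, hTirr, hST⟩ := hSirr.exists_isIrreducible_subset_of_subset_closure
    (hdense.trans (closure_minimal hsub isClosed_closure))
  obtain ⟨z, hzT⟩ := hTirr.nonempty
  let C : IrreducibleCloseds X := ⟨closure T, hTirr.closure, isClosed_closure⟩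
  have hSC : ⟨S, hSirr, hSdef ▸ U.isOpen.isClosed_compl⟩ < C := by
    refine lt_of_le_of_ne hST fun hSC => ?_
    have hSeq : S = closure T := congrArg SetLike.coe hSC
    exact (hSdef ▸ hSeq ▸ subset_closure hzT) (hTZ hzT).1
  have hCtop : ⟨Set.univ, IrreducibleSpace.isIrreducible_univ X, isClosed_univ⟩ ≤ C :=
    Order.isMax_of_coheight_eq_one_of_lt hcodim hSC (Set.subset_univ _)
  exact Scheme.closure_diff_basicOpen_ne_univ hf
    (Set.eq_univ_of_univ_subset (Set.Subset.trans hCtop (closure_mono hTZ)))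
end

section
/- Let V be a nonzero algebraic B-representation with weight decomposition (as in the context). Let m be the smallest weight of V. Then the following three conditions are equivalent: (i) the subspace {v ∈ V : ρ(u(z))v = v for all z ∈ k} is one-dimensional; (ii) the intersection of all nonzero ρ(B)-stable subspaces of V is nonzero; (iii) every nonzero weight space V_i is one-dimensional, and for every weight i of V and every nonzero v ∈ V_i, the component of ρ(u₂)v in V_m (with respect to the weight decomposition) is nonzero. -/
open Matrix

/-- The lower-triangular Borel subgroup `B ⊂ SL₂(k)`. -/
def lowerB (k : Type*) [Field k] : Subgroup (Matrix.SpecialLinearGroup (Fin 2) k) where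
  carrier := {A | (A : Matrix (Fin 2) (Fin 2) k) 0 1 = 0}
  one_mem' := by
    show ((1 : Matrix.SpecialLinearGroup (Fin 2) k) : Matrix (Fin 2) (Fin 2) k) 0 1 = 0
    simp
  mul_mem' := by
    intro A B hA hB
    simp only [Set.mem_setOf_eq] at *
    show ((A * B : Matrix.SpecialLinearGroup (Fin 2) k) : Matrix (Fin 2) (Fin 2) k) 0 1 = 0
    rw [Matrix.SpecialLinearGroup.coe_mul, Matrix.mul_apply, Fin.sum_univ_two, hA, hB]
    ring
  inv_mem' := by
    intro A hA
    simp only [Set.mem_setOf_eq] at *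
    show ((A⁻¹ : Matrix.SpecialLinearGroup (Fin 2) k) : Matrix (Fin 2) (Fin 2) k) 0 1 = 0
    rw [Matrix.SpecialLinearGroup.coe_inv, Matrix.adjugate_fin_two]
    simp [hA]

/-- The lower-triangular unipotent element `u(z) = [[1,0],[z,1]]` of `B`. -/
def uB {k : Type*} [Field k] (z : k) : lowerB k :=
  ⟨⟨!![1, 0; z, 1], by simp [Matrix.det_fin_two_of]⟩,
    show (!![1, 0; z, 1] : Matrix (Fin 2) (Fin 2) k) 0 1 = 0 by simp⟩

/-- The diagonal element `diag(x, x⁻¹)` of `B`. -/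
def dB {k : Type*} [Field k] (x : kˣ) : lowerB k :=
  ⟨⟨!![(x : k), 0; 0, ((x⁻¹ : kˣ) : k)], by simp [Matrix.det_fin_two_of]⟩,
    show (!![(x : k), 0; 0, ((x⁻¹ : kˣ) : k)] : Matrix (Fin 2) (Fin 2) k) 0 1 = 0 by simp⟩


open Module Polynomial in
/-- If a finite polynomial combination of vectors vanishes for all nonzero scalars
over an infinite field, then all coefficient vectors vanish. -/
theorem aux_poly_vanish {k : Type*} [Field k] [Infinite k]
    {V : Type*} [AddCommGroup V] [Module k V]
    (s : Finset ℕ) (w : ℕ → V)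
    (h : ∀ x : k, x ≠ 0 → ∑ j ∈ s, x ^ j • w j = 0) :
    ∀ j ∈ s, w j = 0 := by
  intro j hj
  rw [← Module.forall_dual_apply_eq_zero_iff k]
  intro φ
  set q : k[X] := ∑ j ∈ s, Polynomial.C (φ (w j)) * Polynomial.X ^ j with hq
  have hq0 : q = 0 := by
    apply Polynomial.eq_zero_of_infinite_isRoot
    apply Set.Infinite.mono (s := {x : k | x ≠ 0})
    · intro x hx
      simp only [Set.mem_setOf_eq, Polynomial.IsRoot, hq, Polynomial.eval_finset_sum,
        Polynomial.eval_mul, Polynomial.eval_C, Polynomial.eval_pow, Polynomial.eval_X]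
      have := h x hx
      have := congrArg φ this
      simpa [map_sum, _root_.map_smul, smul_eq_mul, mul_comm] using this
    · have : ({x : k | x ≠ 0}) = {(0:k)}ᶜ := rfl
      rw [this]
      exact Set.Finite.infinite_compl (Set.finite_singleton 0)
  have := congrArg (fun q => Polynomial.coeff q j) hq0
  simp only [hq, Polynomial.finset_sum_coeff, Polynomial.coeff_C_mul, Polynomial.coeff_X_pow,
    Polynomial.coeff_zero, mul_ite, mul_one, mul_zero] at this
  rwa [Finset.sum_eq_single j (fun b _ hb => by simp [Ne.symm hb]) (fun hjs => absurd hj hjs),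
    if_pos rfl] at this

/-- Laurent-polynomial version of `aux_poly_vanish`, with integer exponents. -/
theorem aux_laurent_vanish {k : Type*} [Field k] [Infinite k]
    {V : Type*} [AddCommGroup V] [Module k V]
    (s : Finset ℤ) (w : ℤ → V)
    (h : ∀ x : k, x ≠ 0 → ∑ i ∈ s, x ^ i • w i = 0) :
    ∀ i ∈ s, w i = 0 := by
  rcases s.eq_empty_or_nonempty with rfl | hne
  · simp
  intro i hi
  set c := s.min' hne with hc
  have hcle : ∀ i ∈ s, c ≤ i := fun i hi => s.min'_le i hi
  set f : ℤ → ℕ := fun i => (i - c).toNat with hf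
  have hfi : ∀ i ∈ s, ((f i : ℤ)) = i - c := fun i hi =>
    Int.toNat_of_nonneg (by have := hcle i hi; omega)
  have hinj : Set.InjOn f s := by
    intro a ha b hb hab
    have h1 := hfi a ha; have h2 := hfi b hb
    rw [hab] at h1; omega
  set w' : ℕ → V := fun n => w ((n : ℤ) + c) with hw'
  have hwf : ∀ i ∈ s, w' (f i) = w i := by
    intro i hi
    simp only [hw']
    rw [hfi i hi]
    ring_nf
  have key : ∀ x : k, x ≠ 0 → ∑ n ∈ s.image f, x ^ n • w' n = 0 := by
    intro x hx
    rw [Finset.sum_image hinj]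
    have h2 : ∑ i ∈ s, x ^ (f i) • w' (f i) = ∑ i ∈ s, x ^ (i - c) • w i := by
      apply Finset.sum_congr rfl
      intro i hi
      rw [hwf i hi, ← zpow_natCast x (f i), hfi i hi]
    rw [h2]
    have h3 : (x ^ c) • ∑ i ∈ s, x ^ (i - c) • w i = ∑ i ∈ s, x ^ i • w i := by
      rw [Finset.smul_sum]
      apply Finset.sum_congr rfl
      intro i hi
      rw [smul_smul, ← zpow_add₀ hx]
      ring_nf
    have h4 := h x hx
    rw [← h3] at h4
    exact (smul_eq_zero_iff_right (zpow_ne_zero c hx)).mp h4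
  have := aux_poly_vanish (s.image f) w' key (f i) (Finset.mem_image_of_mem f hi)
  rw [hwf i hi] at this
  exact this

section Proj
variable {k : Type*} [Field k] {V : Type*} [AddCommGroup V] [Module k V]
  (Vw : ℤ → Submodule k V) (hInt : DirectSum.IsInternal Vw)

/-- Projection onto the `i`-th summand of an internal direct sum. -/
noncomputable def auxProj (i : ℤ) : V →ₗ[k] V :=
  (Vw i).subtype ∘ₗ (DirectSum.component k ℤ (fun i => ↥(Vw i)) i) ∘ₗ
    (LinearEquiv.ofBijective (DirectSum.coeLinearMap Vw) hInt).symm.toLinearMap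

theorem auxProj_apply (i : ℤ) (v : V) :
    auxProj Vw hInt i v
      = ((LinearEquiv.ofBijective (DirectSum.coeLinearMap Vw) hInt).symm v i : V) := rfl

theorem auxProj_mem (i : ℤ) (v : V) : auxProj Vw hInt i v ∈ Vw i := by
  rw [auxProj_apply]; exact Submodule.coe_mem _

theorem auxProj_of_mem {i : ℤ} {v : V} (hv : v ∈ Vw i) : auxProj Vw hInt i v = v := by
  rw [auxProj_apply, hInt.ofBijective_coeLinearMap_of_mem hv]

theorem auxProj_of_mem_ne {i j : ℤ} (hij : j ≠ i) {v : V} (hv : v ∈ Vw i) :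
    auxProj Vw hInt j v = 0 := by
  rw [auxProj_apply, hInt.ofBijective_coeLinearMap_of_mem_ne (Ne.symm hij) hv,
    Submodule.coe_zero]

theorem auxProj_rep (v : V) : ∃ s : Finset ℤ,
    (∀ i ∈ s, auxProj Vw hInt i v ≠ 0) ∧ (∀ i ∉ s, auxProj Vw hInt i v = 0) ∧
      ∑ i ∈ s, auxProj Vw hInt i v = v := by
  classical
  set D := LinearEquiv.ofBijective (DirectSum.coeLinearMap Vw) hInt with hD
  refine ⟨(D.symm v).support, ?_, ?_, ?_⟩
  · intro i hi
    rw [auxProj_apply]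
    simpa using DFinsupp.mem_support_iff.mp hi
  · intro i hi
    rw [auxProj_apply]
    have h0 : (D.symm v) i = 0 := DFinsupp.notMem_support_iff.mp hi
    rw [hD] at h0
    rw [h0, Submodule.coe_zero]
  · have h1 : ∑ i ∈ (D.symm v).support, DirectSum.of (fun i => ↥(Vw i)) i ((D.symm v) i)
        = D.symm v := DirectSum.sum_support_of _
    have := congrArg (DirectSum.coeLinearMap Vw) h1
    rw [map_sum] at this
    simp only [DirectSum.coeLinearMap_of] at this
    have h2 : DirectSum.coeLinearMap Vw (D.symm v) = v := D.apply_symm_apply v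
    rw [h2] at this
    simpa [auxProj_apply] using this

end Proj

open Matrix in
/-- Every element of the lower Borel factors as a diagonal times a unipotent element. -/
theorem lowerB_decomp {k : Type*} [Field k] (g : lowerB k) :
    ∃ (x : kˣ) (z : k), g = dB x * uB z := by
  set A : Matrix (Fin 2) (Fin 2) k :=
    ((g : Matrix.SpecialLinearGroup (Fin 2) k) : Matrix (Fin 2) (Fin 2) k) with hA
  have hA01 : A 0 1 = 0 := g.2
  have hdet : A 0 0 * A 1 1 - A 0 1 * A 1 0 = 1 := by
    rw [← Matrix.det_fin_two]
    exact (g : Matrix.SpecialLinearGroup (Fin 2) k).2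
  have ha : A 0 0 ≠ 0 := by
    intro h0; rw [h0, hA01] at hdet; simp at hdet
  have hA11 : A 1 1 = (A 0 0)⁻¹ := by
    field_simp
    rw [hA01] at hdet; linear_combination hdet
  refine ⟨Units.mk0 (A 0 0) ha, A 1 0 * A 0 0, ?_⟩
  apply Subtype.ext
  apply Subtype.ext
  show A = _
  have : ((dB (Units.mk0 (A 0 0) ha) * uB (A 1 0 * A 0 0) : lowerB k) :
        Matrix.SpecialLinearGroup (Fin 2) k)
      = (!![(A 0 0), 0; 0, (A 0 0)⁻¹] : Matrix (Fin 2) (Fin 2) k) * !![1, 0; A 1 0 * A 0 0, 1] :=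
    rfl
  rw [this]
  ext i j
  fin_cases i <;> fin_cases j <;>
    simp [Matrix.mul_apply, Fin.sum_univ_two, hA01, hA11] <;> field_simp

/-- Proposition 4.4 of the paper: for a nonzero algebraic `B`-representation `V`
with weight decomposition, the three characterizations of property (P) are equivalent. -/
theorem propertyP_tfae
    {k : Type*} [Field k] [IsAlgClosed k] (p : ℕ) [Fact p.Prime] [CharP k p]
    {V : Type*} [AddCommGroup V] [Module k V] [FiniteDimensional k V] [Nontrivial V]
    (ρ : lowerB k →* LinearMap.GeneralLinearGroup k V)
    (Vw : ℤ → Submodule k V)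
    (hInt : DirectSum.IsInternal Vw)
    (hfin : {i : ℤ | Vw i ≠ ⊥}.Finite)
    (hdiag : ∀ (x : kˣ) (i : ℤ), ∀ v ∈ Vw i, (ρ (dB x) : V →ₗ[k] V) v = ((x : k) ^ i) • v)
    (E : ℕ → V →ₗ[k] V) (hE0 : E 0 = LinearMap.id)
    (hEshift : ∀ (j : ℕ) (i : ℤ), ∀ v ∈ Vw i, E j v ∈ Vw (i - 2 * j))
    (N : ℕ) (hEbound : ∀ j : ℕ, N < j → E j = 0)
    (hu : ∀ z : k, (ρ (uB z) : V →ₗ[k] V) = ∑ j ∈ Finset.range (N + 1), z ^ j • E j)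
    (m : ℤ) (hm : Vw m ≠ ⊥) (hmin : ∀ i : ℤ, Vw i ≠ ⊥ → m ≤ i) :
    List.TFAE [
      -- (i) the invariants of the unipotent radical form a line
      Module.finrank k
        ↥(⨅ z : k, LinearMap.ker ((ρ (uB z) : V →ₗ[k] V) - LinearMap.id)) = 1,
      -- (ii) the intersection of all nonzero B-stable subspaces is nonzero
      sInf {W : Submodule k V |
        W ≠ ⊥ ∧ ∀ g : lowerB k, ∀ v ∈ W, (ρ g : V →ₗ[k] V) v ∈ W} ≠ ⊥,
      -- (iii) all weight spaces are lines, and ρ(u₂)v has nonzero component in V_m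
      ∀ i : ℤ, Vw i ≠ ⊥ →
        (Module.finrank k ↥(Vw i) = 1 ∧
          ∀ v ∈ Vw i, v ≠ 0 →
            (ρ (uB 1) : V →ₗ[k] V) v ∉ ⨆ j ∈ {j : ℤ | j ≠ m}, Vw j)
    ] := by
  classical
  -- notation
  set SO : Submodule k V := ⨆ j ∈ {j : ℤ | j ≠ m}, Vw j with hSO
  -- basic facts
  have hUz : ∀ (z : k) (v : V), (ρ (uB z) : V →ₗ[k] V) v
      = ∑ j ∈ Finset.range (N+1), z ^ j • E j v := by
    intro z v
    rw [hu z]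
    simp [LinearMap.sum_apply, LinearMap.smul_apply]
  have hE0v : ∀ v : V, E 0 v = v := by intro v; rw [hE0]; rfl
  have hKmem : ∀ v : V,
      (v ∈ ⨅ z : k, LinearMap.ker ((ρ (uB z) : V →ₗ[k] V) - LinearMap.id)) ↔
        ∀ z : k, (ρ (uB z) : V →ₗ[k] V) v = v := by
    intro v
    simp only [Submodule.mem_iInf, LinearMap.mem_ker, LinearMap.sub_apply,
      LinearMap.id_apply, sub_eq_zero]
  have hKE : ∀ v : V, (∀ z : k, (ρ (uB z) : V →ₗ[k] V) v = v) ↔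
      (∀ j : ℕ, 1 ≤ j → E j v = 0) := by
    intro v
    constructor
    · intro hz j hj
      by_cases hjN : N < j
      · rw [hEbound j hjN]; rfl
      have key : ∀ x : k, x ≠ 0 →
          ∑ j ∈ Finset.range N, x ^ j • E (j+1) v = 0 := by
        intro x hx
        have h1 := hUz x v
        rw [hz x, Finset.sum_range_succ'] at h1
        have h2 : ∑ j ∈ Finset.range N, x ^ (j+1) • E (j+1) v = 0 := by
          rw [pow_zero, one_smul, hE0v] at h1
          exact add_eq_right.mp h1.symm
        have h3 : x • ∑ j ∈ Finset.range N, x ^ j • E (j+1) v = 0 := by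
          rw [Finset.smul_sum, ← h2]
          apply Finset.sum_congr rfl
          intro j _
          rw [smul_smul, pow_succ, mul_comm]
        exact (smul_eq_zero_iff_right hx).mp h3
      have := aux_poly_vanish (Finset.range N) (fun j => E (j+1) v) key
      have hj' : j - 1 ∈ Finset.range N := Finset.mem_range.mpr (by omega)
      have := this (j-1) hj'
      simpa [Nat.sub_add_cancel hj] using this
    · intro hE z
      rw [hUz, Finset.sum_range_succ']
      rw [pow_zero, one_smul, hE0v]
      have : ∀ j ∈ Finset.range N, z ^ (j+1) • E (j+1) v = 0 := by
        intro j _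
        rw [hE (j+1) (by omega), smul_zero]
      rw [Finset.sum_congr rfl this, Finset.sum_const_zero, zero_add]
  have hVmK : ∀ v ∈ Vw m, ∀ z : k, (ρ (uB z) : V →ₗ[k] V) v = v := by
    intro v hv
    apply (hKE v).mpr
    intro j hj
    have h1 : E j v ∈ Vw (m - 2 * j) := hEshift j m v hv
    have h2 : Vw (m - 2 * (j:ℤ)) = ⊥ := by
      by_contra hne
      have := hmin _ hne
      omega
    rw [h2] at h1
    exact h1
  have hOrbit : ∀ (i : ℤ) (v : V), v ∈ Vw i → ∀ (x : kˣ) (z : k),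
      (ρ (dB x * uB z) : V →ₗ[k] V) v
        = ∑ j ∈ Finset.range (N+1), (z ^ j * (x:k) ^ (i - 2*(j:ℤ))) • E j v := by
    intro i v hv x z
    rw [_root_.map_mul]
    have hmul : ((ρ (dB x) * ρ (uB z) : LinearMap.GeneralLinearGroup k V) : V →ₗ[k] V) v
        = (ρ (dB x) : V →ₗ[k] V) ((ρ (uB z) : V →ₗ[k] V) v) := by
      rw [Units.val_mul]; rfl
    rw [hmul, hUz, map_sum]
    apply Finset.sum_congr rfl
    intro j _
    rw [_root_.map_smul, hdiag x (i - 2*(j:ℤ)) (E j v) (hEshift j i v hv), smul_smul, mul_comm]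
  have hT1 : ∀ w ∈ SO, auxProj Vw hInt m w = 0 := by
    have hle : SO ≤ LinearMap.ker (auxProj Vw hInt m) := by
      refine iSup_le fun j => iSup_le fun hj w hw => ?_
      exact LinearMap.mem_ker.mpr (auxProj_of_mem_ne Vw hInt (Ne.symm hj) hw)
    exact fun w hw => LinearMap.mem_ker.mp (hle hw)
  have hT2 : ∀ w : V, auxProj Vw hInt m w = 0 → w ∈ SO := by
    intro w hw
    obtain ⟨s, hs1, _, hs3⟩ := auxProj_rep Vw hInt w
    rw [← hs3]
    apply Submodule.sum_mem
    intro i hi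
    have him : i ≠ m := by
      rintro rfl
      exact hs1 i hi hw
    exact le_iSup₂ (f := fun (j : ℤ) (_ : j ∈ {j : ℤ | j ≠ m}) => Vw j) i him
      (auxProj_mem Vw hInt i w)
  have hPmU : ∀ (i : ℤ) (v : V), v ∈ Vw i →
      auxProj Vw hInt m ((ρ (uB 1) : V →ₗ[k] V) v)
        = ∑ j ∈ Finset.range (N+1), if i - 2*(j:ℤ) = m then E j v else 0 := by
    intro i v hv
    rw [hUz, map_sum]
    apply Finset.sum_congr rfl
    intro j _
    rw [one_pow, one_smul]
    by_cases hjm : i - 2*(j:ℤ) = m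
    · rw [if_pos hjm]
      exact auxProj_of_mem Vw hInt (hjm ▸ hEshift j i v hv)
    · rw [if_neg hjm]
      exact auxProj_of_mem_ne Vw hInt (fun h => hjm h.symm) (hEshift j i v hv)
  have hCond : ∀ (i : ℤ) (v : V), v ∈ Vw i →
      (((ρ (uB 1) : V →ₗ[k] V) v ∉ SO) ↔ ∃ j : ℕ, i - 2*(j:ℤ) = m ∧ E j v ≠ 0) := by
    intro i v hv
    constructor
    · intro hnot
      by_contra hno
      push_neg at hno
      apply hnot
      apply hT2
      rw [hPmU i v hv]
      apply Finset.sum_eq_zero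
      intro j _
      by_cases hjm : i - 2*(j:ℤ) = m
      · rw [if_pos hjm, hno j hjm]
      · rw [if_neg hjm]
    · rintro ⟨j0, hj0, hE0'⟩ hmem
      apply hE0'
      have h0 := hT1 _ hmem
      rw [hPmU i v hv] at h0
      by_cases hj0N : j0 < N + 1
      · rw [Finset.sum_eq_single j0 (fun b _ hbne => by
          rw [if_neg (by omega)]) (fun h => absurd (Finset.mem_range.mpr hj0N) h)] at h0
        rwa [if_pos hj0] at h0
      · rw [hEbound j0 (by omega)]; rfl
  tfae_have 3 → 1
  · intro h3
    have h1m : Module.finrank k (Vw m) = 1 := (h3 m hm).1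
    have hKle : (⨅ z : k, LinearMap.ker ((ρ (uB z) : V →ₗ[k] V) - LinearMap.id)) ≤ Vw m := by
      intro v hv
      have hvE : ∀ j : ℕ, 1 ≤ j → E j v = 0 := (hKE v).mp ((hKmem v).mp hv)
      obtain ⟨s, hs1, _, hs3⟩ := auxProj_rep Vw hInt v
      rcases s.eq_empty_or_nonempty with rfl | hne
      · simp only [Finset.sum_empty] at hs3
        rw [← hs3]
        exact (Vw m).zero_mem
      have hweight : ∀ i ∈ s, m ≤ i := by
        intro i hi
        apply hmin
        exact Submodule.ne_bot_iff _ |>.mpr ⟨_, auxProj_mem Vw hInt i v, hs1 i hi⟩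
      set i0 := s.max' hne with hi0def
      by_cases him : i0 = m
      · rw [← hs3]
        apply Submodule.sum_mem
        intro i hi
        have h1 : i ≤ m := him ▸ s.le_max' i hi
        have h2 : i = m := le_antisymm h1 (hweight i hi)
        exact h2 ▸ auxProj_mem Vw hInt i v
      · exfalso
        have hi0s : i0 ∈ s := s.max'_mem hne
        have hi0m : m < i0 := lt_of_le_of_ne (hweight i0 hi0s) (Ne.symm him)
        have hvi : auxProj Vw hInt i0 v ∈ Vw i0 := auxProj_mem Vw hInt i0 v
        have hvi0 : auxProj Vw hInt i0 v ≠ 0 := hs1 i0 hi0s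
        have hi0w : Vw i0 ≠ ⊥ := Submodule.ne_bot_iff _ |>.mpr ⟨_, hvi, hvi0⟩
        have hnotin := (h3 i0 hi0w).2 _ hvi hvi0
        obtain ⟨j0, hj0, hEj0⟩ := (hCond i0 _ hvi).mp hnotin
        have hj01 : 1 ≤ j0 := by omega
        have hEv : E j0 v = 0 := hvE j0 hj01
        apply hEj0
        have hcalc : auxProj Vw hInt m (E j0 v) = E j0 (auxProj Vw hInt i0 v) := by
          conv_lhs => rw [← hs3]
          rw [map_sum, map_sum]
          rw [Finset.sum_eq_single i0 (fun b hb hbne => by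
              refine auxProj_of_mem_ne Vw hInt ?_ (hEshift j0 b _ (auxProj_mem Vw hInt b v))
              omega)
            (fun h => absurd hi0s h)]
          exact auxProj_of_mem Vw hInt (hj0 ▸ hEshift j0 i0 _ hvi)
        rw [hEv, map_zero] at hcalc
        exact hcalc.symm
    have hKeq : (⨅ z : k, LinearMap.ker ((ρ (uB z) : V →ₗ[k] V) - LinearMap.id)) = Vw m := by
      apply le_antisymm hKle
      intro v hv
      exact (hKmem v).mpr (hVmK v hv)
    rw [hKeq]
    exact h1m
  tfae_have 1 → 2
  · intro h1
    have hVmpos : 0 < Module.finrank k (Vw m) :=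
      Module.finrank_pos_iff.mpr (Submodule.nontrivial_iff_ne_bot.mpr hm)
    have hKeq : Vw m = (⨅ z : k, LinearMap.ker ((ρ (uB z) : V →ₗ[k] V) - LinearMap.id)) := by
      apply Submodule.eq_of_le_of_finrank_le
      · intro v hv
        exact (hKmem v).mpr (hVmK v hv)
      · omega
    have hle : Vw m ≤ sInf {W : Submodule k V |
        W ≠ ⊥ ∧ ∀ g : lowerB k, ∀ v ∈ W, (ρ g : V →ₗ[k] V) v ∈ W} := by
      apply le_sInf
      rintro W ⟨hWne, hWst⟩
      -- every B-stable subspace is stable under all weight projections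
      have hstab : ∀ (i : ℤ) (u : V), u ∈ W → auxProj Vw hInt i u ∈ W := by
        intro i u huW
        obtain ⟨s, _, hs2, hs3⟩ := auxProj_rep Vw hInt u
        by_cases his : i ∈ s
        · have key : ∀ x : k, x ≠ 0 →
              ∑ i' ∈ s, x ^ i' • W.mkQ (auxProj Vw hInt i' u) = 0 := by
            intro x hx
            have hd := hWst (dB (Units.mk0 x hx)) u huW
            have hcalc : (ρ (dB (Units.mk0 x hx)) : V →ₗ[k] V) u
                = ∑ i' ∈ s, x ^ i' • auxProj Vw hInt i' u := by
              conv_lhs => rw [← hs3]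
              rw [map_sum]
              apply Finset.sum_congr rfl
              intro i' _
              exact hdiag (Units.mk0 x hx) i' _ (auxProj_mem Vw hInt i' u)
            calc ∑ i' ∈ s, x ^ i' • W.mkQ (auxProj Vw hInt i' u)
                = W.mkQ (∑ i' ∈ s, x ^ i' • auxProj Vw hInt i' u) := by
                  rw [map_sum]
                  exact Finset.sum_congr rfl (fun i' _ => (_root_.map_smul _ _ _).symm)
              _ = W.mkQ ((ρ (dB (Units.mk0 x hx)) : V →ₗ[k] V) u) := by rw [hcalc]
              _ = 0 := by
                  rw [Submodule.mkQ_apply]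
                  exact (Submodule.Quotient.mk_eq_zero W).mpr hd
          have := aux_laurent_vanish s (fun i' => W.mkQ (auxProj Vw hInt i' u)) key i his
          exact (Submodule.Quotient.mk_eq_zero W).mp this
        · rw [hs2 i his]
          exact W.zero_mem
      -- W stable under the operators E j
      have hEstab : ∀ (j : ℕ) (u : V), u ∈ W → E j u ∈ W := by
        intro j u huW
        by_cases hjN : N < j
        · rw [hEbound j hjN]
          exact W.zero_mem
        have key : ∀ x : k, x ≠ 0 →
            ∑ j' ∈ Finset.range (N+1), x ^ j' • W.mkQ (E j' u) = 0 := by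
          intro x hx
          have hd := hWst (uB x) u huW
          rw [hUz] at hd
          calc ∑ j' ∈ Finset.range (N+1), x ^ j' • W.mkQ (E j' u)
              = W.mkQ (∑ j' ∈ Finset.range (N+1), x ^ j' • E j' u) := by
                rw [map_sum]
                exact Finset.sum_congr rfl (fun j' _ => (_root_.map_smul _ _ _).symm)
            _ = 0 := by
                rw [Submodule.mkQ_apply]
                exact (Submodule.Quotient.mk_eq_zero W).mpr hd
        have := aux_poly_vanish (Finset.range (N+1)) (fun j' => W.mkQ (E j' u)) key j
          (Finset.mem_range.mpr (by omega))
        exact (Submodule.Quotient.mk_eq_zero W).mp this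
      -- find a minimal weight vector in W
      obtain ⟨v, hvW, hv0⟩ := Submodule.ne_bot_iff W |>.mp hWne
      have hTfin : {i : ℤ | ∃ w ∈ W, auxProj Vw hInt i w ≠ 0}.Finite := by
        apply hfin.subset
        rintro i ⟨w, _, hw0⟩
        exact Submodule.ne_bot_iff _ |>.mpr ⟨_, auxProj_mem Vw hInt i w, hw0⟩
      have hTne : {i : ℤ | ∃ w ∈ W, auxProj Vw hInt i w ≠ 0}.Nonempty := by
        obtain ⟨s, hs1, hs2, hs3⟩ := auxProj_rep Vw hInt v
        rcases s.eq_empty_or_nonempty with rfl | hne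
        · simp only [Finset.sum_empty] at hs3
          exact absurd hs3.symm hv0
        obtain ⟨i, hi⟩ := hne
        exact ⟨i, v, hvW, hs1 i hi⟩
      set T := hTfin.toFinset with hT
      have hTne' : T.Nonempty := by rwa [hT, Set.Finite.toFinset_nonempty]
      set i0 := T.min' hTne' with hi0def
      have hi0T : i0 ∈ {i : ℤ | ∃ w ∈ W, auxProj Vw hInt i w ≠ 0} := by
        rw [← hTfin.mem_toFinset]
        exact T.min'_mem hTne'
      obtain ⟨w, hwW, hw0⟩ := hi0T
      set w0 := auxProj Vw hInt i0 w with hw0def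
      have hw0W : w0 ∈ W := hstab i0 w hwW
      have hw0V : w0 ∈ Vw i0 := auxProj_mem Vw hInt i0 w
      have hw0K : ∀ j : ℕ, 1 ≤ j → E j w0 = 0 := by
        intro j hj
        by_contra hne
        have hmem : E j w0 ∈ W := hEstab j w0 hw0W
        have hmem2 : E j w0 ∈ Vw (i0 - 2*(j:ℤ)) := hEshift j i0 w0 hw0V
        have : i0 - 2*(j:ℤ) ∈ {i : ℤ | ∃ w ∈ W, auxProj Vw hInt i w ≠ 0} :=
          ⟨E j w0, hmem, by rw [auxProj_of_mem Vw hInt hmem2]; exact hne⟩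
        have hle' := T.min'_le _ (hTfin.mem_toFinset.mpr this)
        rw [← hi0def] at hle'
        omega
      have hw0Vm : w0 ∈ Vw m := by
        rw [hKeq]
        exact (hKmem w0).mpr ((hKE w0).mpr hw0K)
      -- Vw m is spanned by w0
      have hVm1 : Module.finrank k ↥(Vw m) = 1 := by rw [hKeq]; exact h1
      have hVmspan : Vw m = Submodule.span k {w0} := by
        have hle2 : Submodule.span k {w0} ≤ Vw m := by
          rw [Submodule.span_le, Set.singleton_subset_iff]
          exact hw0Vm
        have h1' : Module.finrank k ↥(Submodule.span k {w0}) = 1 := finrank_span_singleton hw0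
        exact (Submodule.eq_of_le_of_finrank_le hle2 (by omega)).symm
      rw [hVmspan, Submodule.span_le, Set.singleton_subset_iff]
      exact hw0W
    intro hbot
    rw [hbot, le_bot_iff] at hle
    exact hm hle
  tfae_have 2 → 3
  · intro h2
    set SS := {W : Submodule k V |
        W ≠ ⊥ ∧ ∀ g : lowerB k, ∀ v ∈ W, (ρ g : V →ₗ[k] V) v ∈ W} with hSS
    have hLpos : 0 < Module.finrank k ↥(sInf SS) := by
      apply Module.finrank_pos_iff.mpr
      apply Submodule.nontrivial_iff_ne_bot.mpr
      rw [hSS]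
      exact h2
    -- spans of nonzero vectors of Vw m are B-stable
    have hspan_stable : ∀ w ∈ Vw m, w ≠ 0 → Submodule.span k {w} ∈ SS := by
      intro w hw hw0
      constructor
      · rw [Ne, Submodule.span_singleton_eq_bot]
        exact hw0
      · intro g v hv
        obtain ⟨x, z, rfl⟩ := lowerB_decomp g
        rw [Submodule.mem_span_singleton] at hv ⊢
        obtain ⟨c, rfl⟩ := hv
        refine ⟨c * (x:k) ^ m, ?_⟩
        rw [_root_.map_smul]
        have : (ρ (dB x * uB z) : V →ₗ[k] V) w = ((x:k) ^ m) • w := by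
          rw [_root_.map_mul]
          have hmul : ((ρ (dB x) * ρ (uB z) : LinearMap.GeneralLinearGroup k V) : V →ₗ[k] V) w
              = (ρ (dB x) : V →ₗ[k] V) ((ρ (uB z) : V →ₗ[k] V) w) := by
            rw [Units.val_mul]; rfl
          rw [hmul, hVmK w hw z, hdiag x m w hw]
        rw [this, smul_smul]
    have hLspan : ∀ w ∈ Vw m, w ≠ 0 → sInf SS = Submodule.span k {w} := by
      intro w hw hw0
      apply Submodule.eq_of_le_of_finrank_le (sInf_le (hspan_stable w hw hw0))
      rw [finrank_span_singleton hw0]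
      omega
    obtain ⟨wm, hwm, hwm0⟩ := Submodule.ne_bot_iff _ |>.mp hm
    have hwmL : wm ∈ sInf SS := by
      rw [hLspan wm hwm hwm0]
      exact Submodule.mem_span_singleton_self wm
    have hVmeq : Vw m = Submodule.span k {wm} := by
      apply le_antisymm
      · intro w' hw'
        by_cases hw'0 : w' = 0
        · rw [hw'0]; exact Submodule.zero_mem _
        · have e1 := hLspan w' hw' hw'0
          have e2 := hLspan wm hwm hwm0
          rw [← e2, e1]
          exact Submodule.mem_span_singleton_self w'
      · rw [Submodule.span_le, Set.singleton_subset_iff]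
        exact hwm
    have hVm1 : Module.finrank k (Vw m) = 1 := by
      rw [hVmeq]
      exact finrank_span_singleton hwm0
    intro i hi
    have hpart2 : ∀ v ∈ Vw i, v ≠ 0 → (ρ (uB 1) : V →ₗ[k] V) v ∉ SO := by
      intro v hvi hv0 hmem
      have hforall : ∀ j : ℕ, i - 2*(j:ℤ) = m → E j v = 0 := by
        have := (hCond i v hvi).not.mp (fun h => h hmem)
        push_neg at this
        exact this
      set W := Submodule.span k (Set.range fun g : lowerB k => (ρ g : V →ₗ[k] V) v) with hW
      have hWSS : W ∈ SS := by
        constructor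
        · intro hWbot
          have hvmem : v ∈ W := Submodule.subset_span ⟨1, by show (ρ 1 : V →ₗ[k] V) v = v; rw [_root_.map_one]; rfl⟩
          rw [hWbot] at hvmem
          exact hv0 ((Submodule.mem_bot k).mp hvmem)
        · intro g u hu
          have : Submodule.map (ρ g : V →ₗ[k] V) W ≤ W := by
            rw [hW, Submodule.map_span, Submodule.span_le]
            rintro _ ⟨_, ⟨g', rfl⟩, rfl⟩
            apply Submodule.subset_span
            refine ⟨g * g', ?_⟩
            show (ρ (g * g') : V →ₗ[k] V) v = (ρ g : V →ₗ[k] V) ((ρ g' : V →ₗ[k] V) v)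
            rw [_root_.map_mul, Units.val_mul]
            rfl
          exact this ⟨u, hu, rfl⟩
      have hWker : W ≤ LinearMap.ker (auxProj Vw hInt m) := by
        rw [hW, Submodule.span_le]
        rintro _ ⟨g, rfl⟩
        obtain ⟨x, z, rfl⟩ := lowerB_decomp g
        show (ρ (dB x * uB z) : V →ₗ[k] V) v ∈ LinearMap.ker (auxProj Vw hInt m)
        rw [LinearMap.mem_ker, hOrbit i v hvi x z, map_sum]
        apply Finset.sum_eq_zero
        intro j _
        rw [_root_.map_smul]
        by_cases hjm : i - 2*(j:ℤ) = m
        · rw [hforall j hjm, map_zero, smul_zero]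
        · rw [auxProj_of_mem_ne Vw hInt (fun h => hjm h.symm) (hEshift j i v hvi), smul_zero]
      have hwmW : wm ∈ W := sInf_le hWSS hwmL
      have : auxProj Vw hInt m wm = 0 := LinearMap.mem_ker.mp (hWker hwmW)
      rw [auxProj_of_mem Vw hInt hwm] at this
      exact hwm0 this
    refine ⟨?_, fun v hv hv0 => by
      have := hpart2 v hv hv0
      rwa [hSO] at this⟩
    -- dimension one
    obtain ⟨v0, hv0V, hv00⟩ := Submodule.ne_bot_iff _ |>.mp hi
    obtain ⟨j0, hj0, hEj0⟩ := (hCond i v0 hv0V).mp (hpart2 v0 hv0V hv00)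
    have hmemF : ∀ u ∈ Vw i, E j0 u ∈ Vw m := by
      intro u hu
      exact hj0 ▸ hEshift j0 i u hu
    have hinj : Function.Injective ((E j0).restrict hmemF) := by
      rw [← LinearMap.ker_eq_bot, Submodule.eq_bot_iff]
      rintro ⟨u, huV⟩ hu
      rw [LinearMap.mem_ker] at hu
      have huE : E j0 u = 0 := congrArg Subtype.val hu
      rw [Submodule.mk_eq_zero]
      by_contra hune
      obtain ⟨j1, hj1, hEj1⟩ := (hCond i u huV).mp (hpart2 u huV hune)
      have : j1 = j0 := by omega
      rw [this] at hEj1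
      exact hEj1 huE
    have hle1 : Module.finrank k (Vw i) ≤ 1 := by
      have := LinearMap.finrank_le_finrank_of_injective hinj
      omega
    have hge1 : 0 < Module.finrank k (Vw i) :=
      Module.finrank_pos_iff.mpr (Submodule.nontrivial_iff_ne_bot.mpr hi)
    omega
  tfae_finish
end

section
/- Let V be a nonzero algebraic B-representation with weight decomposition (as in the context) satisfying property (P), and let m be the smallest weight of V. Let q be a power of p. Then for every i ∈ ℤ and every nonzero f ∈ V_i, the following are equivalent: (a) for every j ∈ ℤ with (q−1)·j < (q+1)·i, the component of ρ(u₂)f in V_j (with respect to the weight decomposition) is zero; (b) (q+1)·i ≤ (q−1)·m. -/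
open Matrix

/-!
Writing `U z = ρ(u(z)) = ∑ zʲ E⁽ʲ⁾`, comparing coefficients of `w` in `U z U w = U (z + w)`
(possible as `k` is infinite) gives `U z E⁽ʲ⁾ = ∑_c (c choose j) z^(c-j) E⁽ᶜ⁾`; hence for `f ≠ 0`
the last nonzero `E⁽ʲ⁾ f` is a nonzero `U`-fixed vector. The lowest weight space consists of fixed
vectors, so by (P) it is the whole fixed space, and `E⁽ʲ⁾ f` has weight `i - 2j = m`. Thus
`ρ(u₂) f = ∑ E⁽ʲ⁾ f` has a nonzero component of weight `m`, which (a) forbids unless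
`(q+1)i ≤ (q-1)m`. Conversely, all components of `ρ(u₂) f` have weights `i - 2j ≥ m`, and
`(q-1)(i-2j) ≥ (q-1)m` since `q ≥ 1`.
-/

open Finset Polynomial

section CoefficientComparison

variable {k M : Type*} [Field k] [AddCommGroup M] [Module k M]

theorem eq_zero_of_forall_sum_pow_smul_eq_zero [Infinite k] {n : ℕ} {g : ℕ → M}
    (h : ∀ z : k, ∑ j ∈ range n, z ^ j • g j = 0) {j : ℕ} (hj : j < n) : g j = 0 := by
  rw [← Module.forall_dual_apply_eq_zero_iff k]
  intro φ
  let P : k[X] := ∑ l ∈ range n, monomial l (φ (g l))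
  have hP : P = 0 := Polynomial.funext fun z => by
    simpa [P, eval_finsetSum, mul_comm] using congrArg φ (h z)
  simpa [P, finsetSum_coeff, coeff_monomial, hj] using congrArg (coeff · j) hP

theorem add_pow_eq_sum_range_choose {R : Type*} [CommSemiring R] (w z : R) {c n : ℕ}
    (hc : c < n) : (w + z) ^ c = ∑ b ∈ range n, w ^ b * ((c.choose b : R) * z ^ (c - b)) := by
  rw [add_pow, ← Finset.sum_subset (range_subset_range.mpr hc)]
  · exact Finset.sum_congr rfl fun b _ => by ring
  · intro b _ hb
    rw [Nat.choose_eq_zero_of_lt (by simpa using hb), Nat.cast_zero, zero_mul, mul_zero]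

end CoefficientComparison

section Unipotent

variable {k V : Type*} [Field k] [AddCommGroup V] [Module k V]
  {U : k → V →ₗ[k] V} {E : ℕ → V →ₗ[k] V} {N : ℕ}

theorem mul_eq_sum_choose_smul [Infinite k]
    (hU : ∀ z, U z = ∑ j ∈ range (N + 1), z ^ j • E j)
    (hadd : ∀ z w, U (z + w) = U z * U w) (z : k) {b : ℕ} (hb : b ≤ N) :
    U z * E b = ∑ c ∈ range (N + 1), ((c.choose b : k) * z ^ (c - b)) • E c := by
  rw [← sub_eq_zero]
  refine eq_zero_of_forall_sum_pow_smul_eq_zero (k := k) (g := fun b =>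
    U z * E b - ∑ c ∈ range (N + 1), ((c.choose b : k) * z ^ (c - b)) • E c)
    (fun w => ?_) (Nat.lt_succ_of_le hb)
  have lhs : ∑ b ∈ range (N + 1), w ^ b • (U z * E b) = U (z + w) := by
    simp only [hadd, hU w, mul_sum, mul_smul_comm]
  have rhs : ∑ b ∈ range (N + 1), w ^ b •
      ∑ c ∈ range (N + 1), ((c.choose b : k) * z ^ (c - b)) • E c = U (z + w) := by
    simp only [hU (z + w), smul_sum, smul_smul]
    rw [sum_comm]
    refine sum_congr rfl fun c hc => ?_
    rw [← sum_smul, add_comm z w, add_pow_eq_sum_range_choose w z (mem_range.mp hc)]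
  simp only [smul_sub, sum_sub_distrib, lhs, rhs, sub_self]

theorem apply_coeff_eq_self_of_forall_gt [Infinite k]
    (hU : ∀ z, U z = ∑ j ∈ range (N + 1), z ^ j • E j)
    (hadd : ∀ z w, U (z + w) = U z * U w) {x : V} {j : ℕ} (hj : j ≤ N)
    (htop : ∀ c ≤ N, j < c → E c x = 0) (z : k) : U z (E j x) = E j x := by
  rw [← Module.End.mul_apply, mul_eq_sum_choose_smul hU hadd z hj, LinearMap.sum_apply,
    sum_eq_single j]
  · simp
  · intro c hc hcj
    rcases hcj.lt_or_gt with h | h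
    · simp [Nat.choose_eq_zero_of_lt h]
    · simp [htop c (Nat.lt_succ_iff.mp (mem_range.mp hc)) h]
  · exact fun h => absurd (mem_range.mpr (Nat.lt_succ_of_le hj)) h

theorem exists_coeff_ne_zero_fixed [Infinite k]
    (hU : ∀ z, U z = ∑ j ∈ range (N + 1), z ^ j • E j)
    (hadd : ∀ z w, U (z + w) = U z * U w) (hE0 : E 0 = LinearMap.id) {x : V} (hx : x ≠ 0) :
    ∃ j ≤ N, E j x ≠ 0 ∧ ∀ z, U z (E j x) = E j x := by
  classical
  have hj : E (Nat.findGreatest (fun c => E c x ≠ 0) N) x ≠ 0 :=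
    Nat.findGreatest_spec (P := fun c => E c x ≠ 0) (Nat.zero_le N) (by simpa [hE0] using hx)
  refine ⟨_, Nat.findGreatest_le N, hj,
    apply_coeff_eq_self_of_forall_gt hU hadd (Nat.findGreatest_le N) fun c hcN hjc => ?_⟩
  exact not_not.mp (Nat.findGreatest_is_greatest hjc hcN)

end Unipotent

section Weights

variable {k V : Type*} [Field k] [AddCommGroup V] [Module k V]

theorem mem_iInf_ker_sub_id_iff {ι : Type*} {U : ι → V →ₗ[k] V} {v : V} :
    v ∈ ⨅ z, LinearMap.ker (U z - LinearMap.id) ↔ ∀ z, U z v = v := by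
  simp [sub_eq_zero]

theorem Submodule.eq_of_le_of_finrank_eq_one {S₁ S₂ : Submodule k V} (hle : S₁ ≤ S₂)
    (h₂ : Module.finrank k S₂ = 1) (h₁ : S₁ ≠ ⊥) : S₁ = S₂ := by
  have := Module.finite_of_finrank_eq_succ h₂
  have := Submodule.finiteDimensional_of_le hle
  refine Submodule.eq_of_le_of_finrank_le hle ?_
  rw [h₂, Nat.one_le_iff_ne_zero]
  simpa [Submodule.finrank_eq_zero] using h₁

theorem iSupIndep.eq_of_mem {ι : Type*} {W : ι → Submodule k V} (hW : iSupIndep W) {v : V}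
    (hv : v ≠ 0) {a b : ι} (ha : v ∈ W a) (hb : v ∈ W b) : a = b := by
  by_contra h
  exact hv (Submodule.disjoint_def.mp (hW.pairwiseDisjoint h) v ha hb)

theorem iSupIndep.eq_zero_of_sum_mem_biSup {ι κ : Type*} {W : κ → Submodule k V}
    (hW : iSupIndep W) {s : Finset ι} {g : ι → κ} (hg : Set.InjOn g s) {x : ι → V}
    (hx : ∀ c ∈ s, x c ∈ W (g c)) {S : Set κ} (hsum : ∑ c ∈ s, x c ∈ ⨆ j ∈ S, W j)
    {c₀ : ι} (hc₀ : c₀ ∈ s) (hS : g c₀ ∉ S) : x c₀ = 0 := by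
  classical
  have hrest : ∑ c ∈ s.erase c₀, x c ∈ ⨆ j ∈ ({g c₀}ᶜ : Set κ), W j :=
    Submodule.sum_mem _ fun c hc =>
      le_biSup W (show g c ∈ ({g c₀}ᶜ : Set κ) from
        fun h => (mem_erase.mp hc).1 (hg (mem_erase.mp hc).2 hc₀ h)) (hx c (mem_erase.mp hc).2)
  have hsum' : ∑ c ∈ s, x c ∈ ⨆ j ∈ ({g c₀}ᶜ : Set κ), W j :=
    (biSup_mono (f := W) fun j hj (h : j = g c₀) => hS (h ▸ hj)) hsum
  refine Submodule.disjoint_def.mp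
    (hW.disjoint_biSup (y := {g c₀}ᶜ) (Set.notMem_compl_iff.mpr rfl)) _ (hx c₀ hc₀) ?_
  rw [← add_sum_erase s x hc₀] at hsum'
  simpa only [add_sub_cancel_right] using Submodule.sub_mem _ hsum' hrest

variable {U : k → V →ₗ[k] V} {E : ℕ → V →ₗ[k] V} {N : ℕ} {Vw : ℤ → Submodule k V}

theorem lowestWeight_le_fixed (hU : ∀ z, U z = ∑ j ∈ range (N + 1), z ^ j • E j)
    (hE0 : E 0 = LinearMap.id) (hEshift : ∀ (j : ℕ) (i : ℤ), ∀ v ∈ Vw i, E j v ∈ Vw (i - 2 * j))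
    {m : ℤ} (hmin : ∀ i, Vw i ≠ ⊥ → m ≤ i) : Vw m ≤ ⨅ z, LinearMap.ker (U z - LinearMap.id) := by
  intro w hw
  rw [mem_iInf_ker_sub_id_iff]
  intro z
  rw [hU, LinearMap.sum_apply, sum_eq_single 0]
  · simp [hE0]
  · intro j _ hj
    have hbot : Vw (m - 2 * j) = ⊥ := by
      by_contra hb
      have := hmin _ hb
      omega
    have hEw := hEshift j m w hw
    rw [hbot, Submodule.mem_bot] at hEw
    simp [hEw]
  · simp

end Weights

theorem uB_add {k : Type*} [Field k] (z w : k) : uB (z + w) = uB z * uB w := by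
  apply Subtype.ext
  apply Subtype.ext
  show !![1, 0; z + w, 1] = (!![1, 0; z, 1] : Matrix (Fin 2) (Fin 2) k) * !![1, 0; w, 1]
  ext i j
  fin_cases i <;> fin_cases j <;> simp

theorem global_sections_of_propertyP_general
    {k : Type*} [Field k] [IsAlgClosed k] (p : ℕ) [Fact p.Prime]
    (q n : ℕ) (hq : q = p ^ n)
    {V : Type*} [AddCommGroup V] [Module k V]
    (ρ : lowerB k →* LinearMap.GeneralLinearGroup k V)
    (Vw : ℤ → Submodule k V)
    (hInt : DirectSum.IsInternal Vw)
    (E : ℕ → V →ₗ[k] V) (hE0 : E 0 = LinearMap.id)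
    (hEshift : ∀ (j : ℕ) (i : ℤ), ∀ v ∈ Vw i, E j v ∈ Vw (i - 2 * j))
    (N : ℕ)
    (hu : ∀ z : k, (ρ (uB z) : V →ₗ[k] V) = ∑ j ∈ Finset.range (N + 1), z ^ j • E j)
    (hP : Module.finrank k
      ↥(⨅ z : k, LinearMap.ker ((ρ (uB z) : V →ₗ[k] V) - LinearMap.id)) = 1)
    (m : ℤ) (hm : Vw m ≠ ⊥) (hmin : ∀ i : ℤ, Vw i ≠ ⊥ → m ≤ i) :
    ∀ i : ℤ, ∀ f ∈ Vw i, f ≠ 0 →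
      (((ρ (uB 1) : V →ₗ[k] V) f ∈
          ⨆ j ∈ {j : ℤ | ((q : ℤ) + 1) * i ≤ ((q : ℤ) - 1) * j}, Vw j) ↔
        ((q : ℤ) + 1) * i ≤ ((q : ℤ) - 1) * m) := by
  have hadd (z w : k) : (ρ (uB (z + w)) : V →ₗ[k] V) = ρ (uB z) * ρ (uB w) := by
    rw [uB_add, map_mul, Units.val_mul]
  have hq1 : (1 : ℤ) ≤ q := by exact_mod_cast hq ▸ Nat.one_le_pow _ _ (Fact.out : p.Prime).pos
  have hInd := hInt.submodule_iSupIndep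
  intro i f hf hf0
  rw [hu, LinearMap.sum_apply]
  simp only [one_pow, one_smul]
  constructor
  · intro hmem
    by_contra hgt
    obtain ⟨j, hjN, hj0, hfix⟩ := exists_coeff_ne_zero_fixed hu hadd hE0 hf0
    have hjm : E j f ∈ Vw m :=
      (Submodule.eq_of_le_of_finrank_eq_one (lowestWeight_le_fixed hu hE0 hEshift hmin) hP hm).ge
        (mem_iInf_ker_sub_id_iff.mpr hfix)
    have hweight : i - 2 * j = m := hInd.eq_of_mem hj0 (hEshift j i f hf) hjm
    refine hj0 (hInd.eq_zero_of_sum_mem_biSup (g := fun c : ℕ => i - 2 * c)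
      (fun a _ b _ h => by simpa using h) (fun c _ => hEshift c i f hf) hmem
      (mem_range.mpr (Nat.lt_succ_of_le hjN)) ?_)
    simpa [hweight] using hgt
  · intro hle
    refine Submodule.sum_mem _ fun c _ => ?_
    by_cases h0 : E c f = 0
    · simp [h0]
    · have hmc := hmin _ ((Submodule.ne_bot_iff _).mpr ⟨_, hEshift c i f hf, h0⟩)
      refine le_biSup Vw (?_ : i - 2 * c ∈ _) (hEshift c i f hf)
      calc ((q : ℤ) + 1) * i ≤ ((q : ℤ) - 1) * m := hle
        _ ≤ ((q : ℤ) - 1) * (i - 2 * c) := mul_le_mul_of_nonneg_left hmc (by linarith)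

/-- Proposition 4.10 of the paper: for a nonzero algebraic `B`-representation with
weight decomposition satisfying property (P), a nonzero weight vector `f ∈ V_i` has
`ρ(u₂)f` with vanishing components in all `V_j` with `(q−1)j < (q+1)i` if and only if
`(q+1)i ≤ (q−1)m`, where `m` is the smallest weight. -/
theorem global_sections_of_propertyP
    {k : Type*} [Field k] [IsAlgClosed k] (p : ℕ) [Fact p.Prime] [CharP k p]
    (q n : ℕ) (hn : 1 ≤ n) (hq : q = p ^ n)
    {V : Type*} [AddCommGroup V] [Module k V] [FiniteDimensional k V] [Nontrivial V]
    (ρ : lowerB k →* LinearMap.GeneralLinearGroup k V)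
    (Vw : ℤ → Submodule k V)
    (hInt : DirectSum.IsInternal Vw)
    (hfin : {i : ℤ | Vw i ≠ ⊥}.Finite)
    (hdiag : ∀ (x : kˣ) (i : ℤ), ∀ v ∈ Vw i, (ρ (dB x) : V →ₗ[k] V) v = ((x : k) ^ i) • v)
    (E : ℕ → V →ₗ[k] V) (hE0 : E 0 = LinearMap.id)
    (hEshift : ∀ (j : ℕ) (i : ℤ), ∀ v ∈ Vw i, E j v ∈ Vw (i - 2 * j))
    (N : ℕ) (hEbound : ∀ j : ℕ, N < j → E j = 0)
    (hu : ∀ z : k, (ρ (uB z) : V →ₗ[k] V) = ∑ j ∈ Finset.range (N + 1), z ^ j • E j)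
    (hP : Module.finrank k
      ↥(⨅ z : k, LinearMap.ker ((ρ (uB z) : V →ₗ[k] V) - LinearMap.id)) = 1)
    (m : ℤ) (hm : Vw m ≠ ⊥) (hmin : ∀ i : ℤ, Vw i ≠ ⊥ → m ≤ i) :
    ∀ i : ℤ, ∀ f ∈ Vw i, f ≠ 0 →
      (((ρ (uB 1) : V →ₗ[k] V) f ∈
          ⨆ j ∈ {j : ℤ | ((q : ℤ) + 1) * i ≤ ((q : ℤ) - 1) * j}, Vw j) ↔
        ((q : ℤ) + 1) * i ≤ ((q : ℤ) - 1) * m) :=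
  global_sections_of_propertyP_general p q n hq ρ Vw hInt E hE0 hEshift N hu hP m hm hmin
end

section
/- Let k be an infinite field and n ∈ ℕ. Let V ⊆ k[X,Y] be the k-subspace of homogeneous polynomials of degree n. For z ∈ k let σ_z : V → V be the k-linear substitution map P(X,Y) ↦ P(X + zY, Y). Then the subspace {P ∈ V : σ_z(P) = P for all z ∈ k} equals k·Y^n; in particular it is one-dimensional. -/
open MvPolynomial

lemma eval_mul_smul {k : Type*} [CommSemiring k] {σ : Type*} {n : ℕ}
    {P : MvPolynomial σ k} (hP : P.IsHomogeneous n) (c : k) (x : σ → k) :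
    eval (fun i => c * x i) P = c ^ n * eval x P := by
  rw [eval_eq, eval_eq, Finset.mul_sum]
  refine Finset.sum_congr rfl fun d hd => ?_
  have hdn : ∑ i ∈ d.support, d i = n := by
    have := hP (mem_support_iff.mp hd)
    simpa [Finsupp.weight_apply, Finsupp.sum] using this
  rw [← hdn]
  simp_rw [mul_pow, Finset.prod_mul_distrib, Finset.prod_pow_eq_pow_sum]
  ring

/-- For an infinite field `k` and the space of degree-`n` homogeneous polynomials in
`k[X,Y]`, the common fixed space of all substitutions `P(X,Y) ↦ P(X + zY, Y)`, `z ∈ k`,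
is exactly the line `k·Yⁿ`. -/
theorem fixed_space_of_unipotent_substitutions
    {k : Type*} [Field k] [Infinite k] (n : ℕ) :
    {P : MvPolynomial (Fin 2) k |
        P ∈ MvPolynomial.homogeneousSubmodule (Fin 2) k n ∧
        ∀ z : k,
          MvPolynomial.aeval
            (![MvPolynomial.X 0 + MvPolynomial.C z * MvPolynomial.X 1,
               MvPolynomial.X 1] : Fin 2 → MvPolynomial (Fin 2) k) P = P}
      = ↑(Submodule.span k {(MvPolynomial.X 1 : MvPolynomial (Fin 2) k) ^ n}) := by
  ext P
  simp only [Set.mem_setOf_eq, SetLike.mem_coe, Submodule.mem_span_singleton]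
  constructor
  · rintro ⟨hPh, hfix⟩
    rw [mem_homogeneousSubmodule] at hPh
    set c : k := eval ![(0 : k), 1] P with hc
    -- step 1 : eval ![z,1] P = c for all z
    have key : ∀ z : k, eval ![z, 1] P = c := by
      intro z
      have h := congrArg (eval ![(0 : k), 1]) (hfix z)
      rw [aeval_def, algebraMap_eq, ← eval_assoc] at h
      have he : (⇑(eval ![(0 : k), 1]) ∘ ![X 0 + C z * X 1, X 1]) = ![z, 1] := by
        funext i
        fin_cases i <;> simp
      rw [he] at h
      rw [hc, ← h]
    -- the difference polynomial
    set Q : MvPolynomial (Fin 2) k := P - C c * X 1 ^ n with hQ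
    have hQh : Q.IsHomogeneous n := hPh.sub (isHomogeneous_C_mul_X_pow c 1 n)
    have hQz : ∀ z : k, eval ![z, 1] Q = 0 := by
      intro z
      simp [hQ, key z]
    -- Q vanishes everywhere
    have hQall : ∀ x : Fin 2 → k, eval x (X 1 * Q) = 0 := by
      intro x
      rw [eval_mul, eval_X]
      by_cases h1 : x 1 = 0
      · rw [h1, zero_mul]
      · have hx : x = fun i => x 1 * (![x 0 / x 1, 1] i) := by
          funext i
          fin_cases i <;> simp [h1]
          field_simp
        have : eval x Q = 0 := by
          rw [hx, eval_mul_smul hQh, hQz, mul_zero]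
        rw [this, mul_zero]
    have hXQ : X 1 * Q = 0 := by
      apply MvPolynomial.funext
      intro x
      rw [hQall x, map_zero]
    have hQ0 : Q = 0 := by
      rcases mul_eq_zero.mp hXQ with h | h
      · exact absurd h (X_ne_zero 1)
      · exact h
    refine ⟨c, ?_⟩
    have : P = C c * X 1 ^ n := by
      have := sub_eq_zero.mp hQ0
      exact this
    rw [this, smul_eq_C_mul]
  · rintro ⟨a, rfl⟩
    constructor
    · exact Submodule.smul_mem _ a (isHomogeneous_X_pow 1 n)
    · intro z
      rw [map_smul, map_pow, aeval_X]
      simp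
end

section
/- Let q ≥ 2 be an integer. Let S = {(j, m) ∈ ℕ × ℕ : (q−1) divides m − j in ℤ, and q·j ≤ m}. Then S is an additive submonoid of ℕ × ℕ, and S equals the additive submonoid of ℕ × ℕ generated by the two elements (0, q−1) and (1, q). -/
/-- The set `S = {(j, m) ∈ ℕ × ℕ : (q−1) ∣ (m − j) in ℤ and q·j ≤ m}` is an additive
submonoid of `ℕ × ℕ`, and it is generated by `(0, q−1)` and `(1, q)`
(core of Proposition 6.1). -/
theorem monoid_generated_by_two_elements
    (q : ℕ) (hq : 2 ≤ q)
    (S : Set (ℕ × ℕ))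
    (hS : S = {jm : ℕ × ℕ |
      ((q : ℤ) - 1) ∣ ((jm.2 : ℤ) - (jm.1 : ℤ)) ∧ q * jm.1 ≤ jm.2}) :
    ((0, 0) ∈ S ∧ ∀ a ∈ S, ∀ b ∈ S, a + b ∈ S) ∧
      S = ↑(AddSubmonoid.closure {((0 : ℕ), q - 1), ((1 : ℕ), q)}) := by
  subst hS
  have hzero : ((0, 0) : ℕ × ℕ) ∈ {jm : ℕ × ℕ |
      ((q : ℤ) - 1) ∣ ((jm.2 : ℤ) - (jm.1 : ℤ)) ∧ q * jm.1 ≤ jm.2} := by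
    simp
  have hadd : ∀ a ∈ {jm : ℕ × ℕ |
      ((q : ℤ) - 1) ∣ ((jm.2 : ℤ) - (jm.1 : ℤ)) ∧ q * jm.1 ≤ jm.2},
      ∀ b ∈ {jm : ℕ × ℕ |
      ((q : ℤ) - 1) ∣ ((jm.2 : ℤ) - (jm.1 : ℤ)) ∧ q * jm.1 ≤ jm.2},
      a + b ∈ {jm : ℕ × ℕ |
      ((q : ℤ) - 1) ∣ ((jm.2 : ℤ) - (jm.1 : ℤ)) ∧ q * jm.1 ≤ jm.2} := by
    rintro ⟨a1, a2⟩ ⟨hd1, hl1⟩ ⟨b1, b2⟩ ⟨hd2, hl2⟩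
    refine ⟨?_, ?_⟩
    · have := dvd_add hd1 hd2
      simpa [Prod.fst, Prod.snd, sub_add_sub_comm] using this
    · simp only [Prod.snd, Prod.fst] at *
      simp only [Prod.mk_add_mk]
      calc q * (a1 + b1) = q * a1 + q * b1 := by ring
        _ ≤ a2 + b2 := Nat.add_le_add hl1 hl2
  refine ⟨⟨hzero, hadd⟩, ?_⟩
  set T : AddSubmonoid (ℕ × ℕ) :=
    { carrier := {jm : ℕ × ℕ |
        ((q : ℤ) - 1) ∣ ((jm.2 : ℤ) - (jm.1 : ℤ)) ∧ q * jm.1 ≤ jm.2},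
      zero_mem' := hzero,
      add_mem' := fun {a b} ha hb => hadd a ha b hb } with hT
  have hTc : (T : Set (ℕ × ℕ)) = {jm : ℕ × ℕ |
      ((q : ℤ) - 1) ∣ ((jm.2 : ℤ) - (jm.1 : ℤ)) ∧ q * jm.1 ≤ jm.2} := rfl
  rw [← hTc]
  apply le_antisymm
  · -- T ≤ closure
    intro jm hjm
    obtain ⟨j, m⟩ := jm
    obtain ⟨hd, hl⟩ := hjm
    simp only [Prod.fst, Prod.snd] at hd hl
    have hd' : ((q : ℤ) - 1) ∣ ((m : ℤ) - q * j) := by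
      have h1 : ((m : ℤ) - q * j) = ((m : ℤ) - j) - ((q : ℤ) - 1) * j := by ring
      rw [h1]
      exact dvd_sub hd (Dvd.intro _ rfl)
    have hdn : (q - 1) ∣ (m - q * j) := by
      have hc : ((m - q * j : ℕ) : ℤ) = (m : ℤ) - q * j := by
        push_cast [Nat.cast_sub hl]; ring
      have hq1 : ((q - 1 : ℕ) : ℤ) = (q : ℤ) - 1 := by
        push_cast [Nat.cast_sub (by omega : 1 ≤ q)]; ring
      rw [← Int.natCast_dvd_natCast, hc, hq1]
      exact hd'
    obtain ⟨k, hk⟩ := hdn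
    have hm : m = q * j + (q - 1) * k := by omega
    have hmem1 : ((0 : ℕ), q - 1) ∈
        AddSubmonoid.closure {((0 : ℕ), q - 1), ((1 : ℕ), q)} :=
      AddSubmonoid.subset_closure (Set.mem_insert _ _)
    have hmem2 : ((1 : ℕ), q) ∈
        AddSubmonoid.closure {((0 : ℕ), q - 1), ((1 : ℕ), q)} :=
      AddSubmonoid.subset_closure (Set.mem_insert_of_mem _ rfl)
    have : (j, m) = j • ((1 : ℕ), q) + k • ((0 : ℕ), q - 1) := by
      simp [Prod.ext_iff, smul_eq_mul, hm]; ring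
    rw [this]
    exact add_mem (nsmul_mem hmem2 j) (nsmul_mem hmem1 k)
  · -- closure ≤ T
    apply AddSubmonoid.closure_le.mpr
    rintro x (rfl | rfl)
    · refine ⟨?_, by simp⟩
      simp only [Prod.fst, Prod.snd]
      push_cast [Nat.cast_sub (by omega : 1 ≤ q)]
      simp
    · refine ⟨?_, by simp⟩
      simp only [Prod.fst, Prod.snd]
      push_cast
      simp
end

section
/- Let p be a prime, let q be a power of p, and let k be an algebraically closed field of characteristic p. In the polynomial ring k[X,Y], let R be the k-subalgebra generated by the set of all monomials X^j Y^{n−j} where n ∈ ℕ, 0 ≤ j ≤ n, (q−1) divides n − 2j, and (q+1)·j ≤ n. Then: (1) R equals the k-subalgebra of k[X,Y] generated by the two elements Y^{q−1} and X·Y^q; and (2) the elements Y^{q−1} and X·Y^q are algebraically independent over k, so that R is a polynomial k-algebra in two indeterminates. -/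
open MvPolynomial

section Aux

variable {k : Type*} [Field k] (q : ℕ)

private noncomputable def Amap (q : ℕ) (d : Fin 2 →₀ ℕ) : Fin 2 →₀ ℕ :=
  Finsupp.single 0 (d 1) + Finsupp.single 1 ((q - 1) * d 0 + q * d 1)

private lemma Amap_injective (hq2 : 2 ≤ q) : Function.Injective (Amap q) := by
  have k0 : ∀ d : Fin 2 →₀ ℕ, Amap q d 0 = d 1 := by
    intro d
    simp [Amap, Finsupp.single_apply]
  have k1 : ∀ d : Fin 2 →₀ ℕ, Amap q d 1 = (q - 1) * d 0 + q * d 1 := by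
    intro d
    simp [Amap, Finsupp.single_apply]
  intro d d' h
  have h0 : d 1 = d' 1 := by rw [← k0 d, ← k0 d', h]
  have h1 : (q - 1) * d 0 + q * d 1 = (q - 1) * d' 0 + q * d' 1 := by
    rw [← k1 d, ← k1 d', h]
  have hd1 : d 1 = d' 1 := h0
  have hd0 : d 0 = d' 0 := by
    have hq1 : 0 < q - 1 := by omega
    rw [hd1] at h1
    have hmul : (q - 1) * d 0 = (q - 1) * d' 0 := by omega
    exact Nat.eq_of_mul_eq_mul_left hq1 hmul
  ext i
  fin_cases i <;> assumption

private lemma monomial_pair (c : k) (a b : ℕ) :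
    (monomial (Finsupp.single 0 a + Finsupp.single 1 b) c : MvPolynomial (Fin 2) k)
      = C c * X 0 ^ a * X 1 ^ b := by
  rw [X_pow_eq_monomial, X_pow_eq_monomial, C_apply, monomial_mul, monomial_mul]
  simp

private lemma aeval_monomial_pair (d : Fin 2 →₀ ℕ) (c : k) :
    aeval ![(X 1 : MvPolynomial (Fin 2) k) ^ (q - 1), X 0 * X 1 ^ q] (monomial d c)
      = monomial (Amap q d) c := by
  rw [aeval_monomial, Amap, monomial_pair]
  rw [Finsupp.prod_pow, Fin.prod_univ_two]
  simp only [Matrix.cons_val_zero, Matrix.cons_val_one, Matrix.head_cons]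
  rw [algebraMap_eq, ← pow_mul, mul_pow, ← pow_mul, pow_add]
  ring

private lemma coeff_aeval (hq2 : 2 ≤ q) (P : MvPolynomial (Fin 2) k) (d : Fin 2 →₀ ℕ) :
    coeff (Amap q d)
      (aeval ![(X 1 : MvPolynomial (Fin 2) k) ^ (q - 1), X 0 * X 1 ^ q] P)
      = coeff d P := by
  conv_lhs => rw [P.as_sum, map_sum]
  simp_rw [aeval_monomial_pair]
  rw [coeff_sum]
  simp only [coeff_monomial, (Amap_injective q hq2).eq_iff]
  rw [Finset.sum_ite_eq' P.support d (fun v => coeff v P)]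
  split
  · rfl
  · exact (MvPolynomial.notMem_support_iff.mp (by assumption)).symm

end Aux

set_option maxHeartbeats 1000000

/-- Proposition 6.1: the subalgebra `R_Δ ⊆ k[X,Y]` generated by the monomials
`X^j Y^(n−j)` with `0 ≤ j ≤ n`, `(q−1) ∣ (n−2j)` and `(q+1)j ≤ n` equals the subalgebra
generated by `Y^(q−1)` and `X·Y^q`, and these two elements are algebraically
independent over `k`, so `R_Δ` is a polynomial algebra in two indeterminates. -/
theorem RDelta_isPolynomialAlgebra
    (p : ℕ) (hp : p.Prime) (m : ℕ) (hm : 1 ≤ m) (q : ℕ) (hq : q = p ^ m)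
    {k : Type*} [Field k] [IsAlgClosed k] [CharP k p] :
    Algebra.adjoin k
        {P : MvPolynomial (Fin 2) k | ∃ n j : ℕ, j ≤ n ∧
          ((q : ℤ) - 1) ∣ ((n : ℤ) - 2 * (j : ℤ)) ∧ (q + 1) * j ≤ n ∧
          P = MvPolynomial.X 0 ^ j * MvPolynomial.X 1 ^ (n - j)}
      = Algebra.adjoin k
          {(MvPolynomial.X 1 : MvPolynomial (Fin 2) k) ^ (q - 1),
            MvPolynomial.X 0 * MvPolynomial.X 1 ^ q}
    ∧ AlgebraicIndependent k
        (![(MvPolynomial.X 1 : MvPolynomial (Fin 2) k) ^ (q - 1),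
           MvPolynomial.X 0 * MvPolynomial.X 1 ^ q]) := by
  have hq2 : 2 ≤ q := by
    rw [hq]
    exact le_trans hp.two_le (Nat.le_self_pow (by omega) p)
  constructor
  · apply le_antisymm
    · apply Algebra.adjoin_le
      rintro P ⟨n, j, hjn, hdvd, hle, rfl⟩
      -- get t with (q-1)*t = n - (q+1)*j
      have hdvd' : ((q : ℤ) - 1) ∣ ((n : ℤ) - (q + 1) * j) := by
        have : ((n : ℤ) - (q + 1) * j) = ((n : ℤ) - 2 * j) - ((q : ℤ) - 1) * j := by ring
        rw [this]
        exact dvd_sub hdvd (Dvd.intro j rfl)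
      have hdvdN : (q - 1) ∣ (n - (q + 1) * j) := by
        have h2 : ((q - 1 : ℕ) : ℤ) ∣ ((n - (q + 1) * j : ℕ) : ℤ) := by
          rw [Nat.cast_sub hle, Nat.cast_sub (by omega : 1 ≤ q)]
          push_cast
          exact hdvd'
        exact Int.natCast_dvd_natCast.mp h2
      obtain ⟨t, ht⟩ := hdvdN
      have hexp : (n - j) = q * j + (q - 1) * t := by
        have h1 : (q + 1) * j + (q - 1) * t = n := by omega
        have h2 : (q + 1) * j = q * j + j := by ring
        omega
      have heq : (X 0 : MvPolynomial (Fin 2) k) ^ j * X 1 ^ (n - j)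
          = (X 0 * X 1 ^ q) ^ j * (X 1 ^ (q - 1)) ^ t := by
        rw [hexp, mul_pow, ← pow_mul, ← pow_mul, pow_add]
        ring
      rw [heq]
      set S := Algebra.adjoin k
          {(MvPolynomial.X 1 : MvPolynomial (Fin 2) k) ^ (q - 1),
            MvPolynomial.X 0 * MvPolynomial.X 1 ^ q} with hS
      have h1 : (MvPolynomial.X 0 : MvPolynomial (Fin 2) k) * MvPolynomial.X 1 ^ q ∈ S :=
        Algebra.subset_adjoin (Set.mem_insert_of_mem _ rfl)
      have h2 : (MvPolynomial.X 1 : MvPolynomial (Fin 2) k) ^ (q - 1) ∈ S :=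
        Algebra.subset_adjoin (Set.mem_insert _ _)
      exact S.mul_mem (S.pow_mem h1 j) (S.pow_mem h2 t)
    · apply Algebra.adjoin_le
      rintro P (rfl | rfl)
      · apply Algebra.subset_adjoin
        refine ⟨q - 1, 0, Nat.zero_le _, ?_, by omega, by simp⟩
        rw [Nat.cast_sub (by omega : 1 ≤ q)]
        push_cast
        simp
      · apply Algebra.subset_adjoin
        refine ⟨q + 1, 1, by omega, ?_, by omega, by simp⟩
        push_cast
        exact ⟨1, by ring⟩
  · rw [algebraicIndependent_iff]
    intro P hP
    ext d
    rw [coeff_zero, ← coeff_aeval q hq2 P d, hP, coeff_zero]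
end

section
/- Let p be a prime, let R be a commutative ring in which p·1 = 0, and let q = p^m for some integer m ≥ 1. For a 3×3 matrix M over R, define Δ₁(M) = M₁₁M₂₂ − M₁₂M₂₁, Δ₂(M) = M₁₁M₂₃ − M₂₁M₁₃, and H(M) = M₁₁^q·Δ₁(M) − M₂₁^q·Δ₂(M). Then for all a, b, c, d, e, f, g, h, i ∈ R, setting x = [[a,b,0],[c,d,0],[e,f,g]] and Y = [[g^q, h, i],[0, d^q, b^q],[0, c^q, a^q]] (3×3 matrices over R), one has H(x·Y) = g^{q²+q}·(ad − bc)^{q+1}. -/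
lemma sub_pow_prime_pow_eq {p : ℕ} (hp : p.Prime) {R : Type*} [CommRing R]
    (hpR : (p : R) = 0) (m : ℕ) (x y : R) :
    (x - y) ^ p ^ m = x ^ p ^ m - y ^ p ^ m := by
  cases subsingleton_or_nontrivial R with
  | inl h => exact Subsingleton.elim _ _
  | inr h =>
    have hdvd : ringChar R ∣ p := (ringChar.dvd hpR)
    have : ringChar R = 1 ∨ ringChar R = p := (Nat.Prime.eq_one_or_self_of_dvd hp _ hdvd)
    have hchar : ringChar R = p := by
      rcases this with h1 | h1
      · exact absurd h1 (CharP.ringChar_ne_one)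
      · exact h1
    haveI : CharP R p := ringChar.of_eq hchar
    haveI : Fact p.Prime := ⟨hp⟩
    exact sub_pow_char_pow (p := p) x y m

/-- The key computation in the proof of Lemma 6.4 for `U(2,1)`: with
`x = [[a,b,0],[c,d,0],[e,f,g]]` and `Y = [[g^q,h,i],[0,d^q,b^q],[0,c^q,a^q]]` over a
commutative ring `R` of characteristic `p`, the μ-ordinary Hasse invariant satisfies
`H(x·Y) = g^(q²+q)·(ad − bc)^(q+1)`. -/
theorem hasse_invariant_computation
    (p : ℕ) (hp : p.Prime) {R : Type*} [CommRing R] (hpR : (p : R) = 0)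
    (m : ℕ) (hm : 1 ≤ m) (q : ℕ) (hq : q = p ^ m)
    (a b c d e f g h i : R) :
    let x : Matrix (Fin 3) (Fin 3) R := !![a, b, 0; c, d, 0; e, f, g]
    let Y : Matrix (Fin 3) (Fin 3) R := !![g ^ q, h, i; 0, d ^ q, b ^ q; 0, c ^ q, a ^ q]
    let M : Matrix (Fin 3) (Fin 3) R := x * Y
    let Δ₁ : R := M 0 0 * M 1 1 - M 0 1 * M 1 0
    let Δ₂ : R := M 0 0 * M 1 2 - M 1 0 * M 0 2
    M 0 0 ^ q * Δ₁ - M 1 0 ^ q * Δ₂ = g ^ (q ^ 2 + q) * (a * d - b * c) ^ (q + 1) := by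
  intro x Y M Δ₁ Δ₂
  have key : (a * d - b * c) ^ q = (a * d) ^ q - (b * c) ^ q := by
    subst hq; exact sub_pow_prime_pow_eq hp hpR m _ _
  simp [Δ₁, Δ₂, M, x, Y, Matrix.mul_apply, Fin.sum_univ_three]
  rw [pow_succ (a*d - b*c) q, key]
  ring
end

section
/- Let R be a commutative ring and let n, m be natural numbers. Let A₁, A₂ be n×n matrices over R, D₁, D₂ be m×m matrices over R, C₁ an m×n matrix and B₂ an n×m matrix over R, and assume A₁, A₂ and D₂ are invertible. Set x = fromBlocks(A₁, 0; C₁, D₁) and y = fromBlocks(A₂, B₂; 0, D₂), both (n+m)×(n+m) matrices; then y is invertible. Write x·y⁻¹ in block form as fromBlocks(A, B; C, D) with A of size n×n. Then A = A₁·A₂⁻¹ (in particular A is invertible), and D − C·A⁻¹·B = D₁·D₂⁻¹. -/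
open Matrix

/-- The block-matrix verification for the retraction `Θ` on the μ-ordinary locus of
`Sp(2n)` (§3.6): for `x = fromBlocks(A₁,0;C₁,D₁)` and `y = fromBlocks(A₂,B₂;0,D₂)` with
`A₁, A₂, D₂` invertible, `y` is invertible, and the blocks `A, B, C, D` of `x·y⁻¹`
satisfy `A = A₁·A₂⁻¹` (in particular `A` is invertible) and `D − C·A⁻¹·B = D₁·D₂⁻¹`. -/
theorem theta_block_matrix_identity
    {R : Type*} [CommRing R] (n m : ℕ)
    (A₁ A₂ : Matrix (Fin n) (Fin n) R) (D₁ D₂ : Matrix (Fin m) (Fin m) R)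
    (C₁ : Matrix (Fin m) (Fin n) R) (B₂ : Matrix (Fin n) (Fin m) R)
    (hA₁ : IsUnit A₁) (hA₂ : IsUnit A₂) (hD₂ : IsUnit D₂) :
    let x : Matrix (Fin n ⊕ Fin m) (Fin n ⊕ Fin m) R := Matrix.fromBlocks A₁ 0 C₁ D₁
    let y : Matrix (Fin n ⊕ Fin m) (Fin n ⊕ Fin m) R := Matrix.fromBlocks A₂ B₂ 0 D₂
    let A : Matrix (Fin n) (Fin n) R := (x * y⁻¹).toBlocks₁₁
    let B : Matrix (Fin n) (Fin m) R := (x * y⁻¹).toBlocks₁₂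
    let C : Matrix (Fin m) (Fin n) R := (x * y⁻¹).toBlocks₂₁
    let D : Matrix (Fin m) (Fin m) R := (x * y⁻¹).toBlocks₂₂
    IsUnit y ∧ A = A₁ * A₂⁻¹ ∧ IsUnit A ∧ D - C * A⁻¹ * B = D₁ * D₂⁻¹ := by
  intro x y A B C D
  have hdA₁ : IsUnit A₁.det := (Matrix.isUnit_iff_isUnit_det _).mp hA₁
  have hdA₂ : IsUnit A₂.det := (Matrix.isUnit_iff_isUnit_det _).mp hA₂
  have hy : IsUnit y := Matrix.isUnit_fromBlocks_zero₂₁.mpr ⟨hA₂, hD₂⟩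
  have hinv : y⁻¹ = Matrix.fromBlocks A₂⁻¹ (-(A₂⁻¹ * B₂ * D₂⁻¹)) 0 D₂⁻¹ :=
    Matrix.inv_fromBlocks_zero₂₁_of_isUnit_iff A₂ B₂ D₂ (iff_of_true hA₂ hD₂)
  have hxy : x * y⁻¹ =
      Matrix.fromBlocks (A₁ * A₂⁻¹) (A₁ * -(A₂⁻¹ * B₂ * D₂⁻¹))
        (C₁ * A₂⁻¹) (C₁ * -(A₂⁻¹ * B₂ * D₂⁻¹) + D₁ * D₂⁻¹) := by
    rw [hinv, Matrix.fromBlocks_multiply]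
    simp
  have hA : A = A₁ * A₂⁻¹ := by
    show (x * y⁻¹).toBlocks₁₁ = _; rw [hxy, Matrix.toBlocks_fromBlocks₁₁]
  have hB : B = A₁ * -(A₂⁻¹ * B₂ * D₂⁻¹) := by
    show (x * y⁻¹).toBlocks₁₂ = _; rw [hxy, Matrix.toBlocks_fromBlocks₁₂]
  have hC : C = C₁ * A₂⁻¹ := by
    show (x * y⁻¹).toBlocks₂₁ = _; rw [hxy, Matrix.toBlocks_fromBlocks₂₁]
  have hD : D = C₁ * -(A₂⁻¹ * B₂ * D₂⁻¹) + D₁ * D₂⁻¹ := by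
    show (x * y⁻¹).toBlocks₂₂ = _; rw [hxy, Matrix.toBlocks_fromBlocks₂₂]
  have hAu : IsUnit A := by
    rw [hA]
    exact hA₁.mul ((Matrix.isUnit_iff_isUnit_det _).mpr (Matrix.isUnit_nonsing_inv_det _ hdA₂))
  refine ⟨hy, hA, hAu, ?_⟩
  have hAinv : A⁻¹ = A₂ * A₁⁻¹ := by
    rw [hA, Matrix.mul_inv_rev, Matrix.nonsing_inv_nonsing_inv _ hdA₂]
  rw [hB, hC, hD, hAinv]
  have h1 : C₁ * A₂⁻¹ * (A₂ * A₁⁻¹) = C₁ * A₁⁻¹ := by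
    rw [← Matrix.mul_assoc, Matrix.nonsing_inv_mul_cancel_right _ _ hdA₂]
  have h2 : C₁ * A₁⁻¹ * (A₁ * -(A₂⁻¹ * B₂ * D₂⁻¹)) = C₁ * -(A₂⁻¹ * B₂ * D₂⁻¹) := by
    rw [← Matrix.mul_assoc, Matrix.nonsing_inv_mul_cancel_right _ _ hdA₁]
  rw [h1, h2, add_sub_cancel_left]
end
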